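/- arXiv:1409.8022 — 4 statements merged into one kernel-verified Lean document; each statement's English description precedes it below -/
import Mathlib

section
/- If m ∈ ℕ, ϑ ∈ [0,∞), and E is a countably infinite subset of [0,∞), then there exists a finite discrete Borel measure μ on [0,∞) whose set of atoms is a countably infinite subset of [ϑ,∞) disjoint from E, such that ∫ s^m dμ(s) < ∞ and ∫ s^{m+1} dμ(s) = ∞. -/
open MeasureTheory ENNReal

/-- `μ` is a discrete Borel measure on `ℝ` whose set of atoms is exactly `Δ`. -/
def IsDiscreteWithAtoms (μ : Measure ℝ) (Δ : Set ℝ) : Prop :=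
  ∃ α : ℝ → ℝ, (∀ t ∈ Δ, 0 < α t) ∧
    μ = Measure.sum (fun t : Δ => ENNReal.ofReal (α t) • Measure.dirac (t : ℝ))

/-!
Since a countable set has dense complement, one can pick points `t n ∉ E` with
`2ⁿ c < t n < 2ⁿ⁺¹ c`, where `c = max ϑ 1`. Put the mass `x⁻⁽ᵐ⁺¹⁾` at each atom `x = t n`:
the `m`-th moment is then `∑ 1 / t n ≤ ∑ 2⁻ⁿ < ∞`, while every atom contributes `1` to the
`(m+1)`-th moment.
-/

lemma exists_strictMono_two_pow_mul_lt_notMem {E : Set ℝ} (hE : E.Countable) {c : ℝ}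
    (hc : 0 < c) : ∃ t : ℕ → ℝ, StrictMono t ∧ ∀ n, 2 ^ n * c < t n ∧ t n ∉ E := by
  have hdense : Dense Eᶜ := hE.dense_compl ℝ
  have hchoice : ∀ n : ℕ, ∃ t, t ∈ Set.Ioo (2 ^ n * c) (2 ^ (n + 1) * c) ∧ t ∉ E := fun n ↦
    hdense.inter_open_nonempty _ isOpen_Ioo
      (Set.nonempty_Ioo.2 (by gcongr; exacts [one_lt_two, n.lt_succ_self]))
  choose t ht hE using hchoice
  refine ⟨t, strictMono_nat_of_lt_succ fun n ↦ ?_, fun n ↦ ⟨(ht n).1, hE n⟩⟩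
  exact (ht n).2.trans (ht (n + 1)).1

lemma lintegral_sum_smul_dirac_range {ι α : Type*} [MeasurableSpace α]
    [MeasurableSingletonClass α] {t : ι → α} (ht : Function.Injective t) (w g : α → ℝ≥0∞) :
    ∫⁻ s, g s ∂(Measure.sum fun x : Set.range t ↦ w x • Measure.dirac (x : α)) =
      ∑' i, w (t i) * g (t i) := by
  rw [lintegral_sum_measure, ← (Equiv.ofInjective t ht).tsum_eq]
  simp [lintegral_smul_measure, lintegral_dirac]

lemma tsum_ofReal_inv_lt_top_of_two_pow_le {t : ℕ → ℝ} (ht : ∀ n, 2 ^ n ≤ t n) :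
    ∑' n, ENNReal.ofReal (t n)⁻¹ < ⊤ := by
  have hterm : ∀ n, ENNReal.ofReal (t n)⁻¹ ≤ 2⁻¹ ^ n := fun n ↦ by
    calc ENNReal.ofReal (t n)⁻¹ ≤ ENNReal.ofReal ((2 : ℝ) ^ n)⁻¹ :=
          ENNReal.ofReal_le_ofReal (inv_anti₀ (by positivity) (ht n))
      _ = 2⁻¹ ^ n := by
          rw [ENNReal.ofReal_inv_of_pos (by positivity), ENNReal.ofReal_pow zero_le_two,
            ENNReal.ofReal_ofNat, ENNReal.inv_pow]
  calc ∑' n, ENNReal.ofReal (t n)⁻¹ ≤ ∑' n : ℕ, (2⁻¹ : ℝ≥0∞) ^ n := ENNReal.tsum_le_tsum hterm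
    _ = 2 := ENNReal.tsum_geometric_two
    _ < ⊤ := ENNReal.ofNat_lt_top

noncomputable def invPowAtoms (m : ℕ) (t : ℕ → ℝ) : Measure ℝ :=
  Measure.sum fun x : Set.range t ↦ ENNReal.ofReal ((x : ℝ) ^ (m + 1))⁻¹ • Measure.dirac (x : ℝ)

section invPowAtoms

variable (m : ℕ) {t : ℕ → ℝ}

lemma isDiscreteWithAtoms_invPowAtoms (hpos : ∀ n, 0 < t n) :
    IsDiscreteWithAtoms (invPowAtoms m t) (Set.range t) :=
  ⟨fun s ↦ (s ^ (m + 1))⁻¹, by rintro _ ⟨n, rfl⟩; exact inv_pos.2 (pow_pos (hpos n) _), rfl⟩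

lemma lintegral_invPowAtoms (hinj : Function.Injective t) (g : ℝ → ℝ≥0∞) :
    ∫⁻ s, g s ∂invPowAtoms m t = ∑' n, ENNReal.ofReal (t n ^ (m + 1))⁻¹ * g (t n) :=
  lintegral_sum_smul_dirac_range hinj (fun s ↦ ENNReal.ofReal (s ^ (m + 1))⁻¹) g

lemma isFiniteMeasure_invPowAtoms (hinj : Function.Injective t) (htwo : ∀ n, 2 ^ n ≤ t n) :
    IsFiniteMeasure (invPowAtoms m t) := by
  have hmass : ∀ n, ENNReal.ofReal (t n ^ (m + 1))⁻¹ * 1 ≤ ENNReal.ofReal (t n)⁻¹ := fun n ↦ by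
    have ht1 : 1 ≤ t n := (one_le_pow₀ one_le_two).trans (htwo n)
    rw [mul_one]
    exact ENNReal.ofReal_le_ofReal
      (inv_anti₀ (one_pos.trans_le ht1) (le_self_pow₀ ht1 m.succ_ne_zero))
  constructor
  rw [← lintegral_one, lintegral_invPowAtoms m hinj]
  exact (ENNReal.tsum_le_tsum hmass).trans_lt (tsum_ofReal_inv_lt_top_of_two_pow_le htwo)

lemma lintegral_pow_invPowAtoms_lt_top (hinj : Function.Injective t) (htwo : ∀ n, 2 ^ n ≤ t n) :
    ∫⁻ s, ENNReal.ofReal (s ^ m) ∂invPowAtoms m t < ⊤ := by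
  have hterm : ∀ n, ENNReal.ofReal (t n ^ (m + 1))⁻¹ * ENNReal.ofReal (t n ^ m) =
      ENNReal.ofReal (t n)⁻¹ := fun n ↦ by
    have hpos : 0 < t n := (by positivity : (0 : ℝ) < 2 ^ n).trans_le (htwo n)
    rw [← ENNReal.ofReal_mul (inv_pos.2 (pow_pos hpos _)).le, pow_succ, mul_inv, mul_right_comm,
      inv_mul_cancel₀ (pow_ne_zero m hpos.ne'), one_mul]
  simpa only [lintegral_invPowAtoms m hinj, hterm] using tsum_ofReal_inv_lt_top_of_two_pow_le htwo

lemma lintegral_pow_succ_invPowAtoms_eq_top (hinj : Function.Injective t)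
    (hpos : ∀ n, 0 < t n) : ∫⁻ s, ENNReal.ofReal (s ^ (m + 1)) ∂invPowAtoms m t = ⊤ := by
  have hterm : ∀ n, ENNReal.ofReal (t n ^ (m + 1))⁻¹ * ENNReal.ofReal (t n ^ (m + 1)) = 1 :=
    fun n ↦ by
      rw [← ENNReal.ofReal_mul (inv_pos.2 (pow_pos (hpos n) _)).le,
        inv_mul_cancel₀ (pow_ne_zero _ (hpos n).ne'), ENNReal.ofReal_one]
  simp only [lintegral_invPowAtoms m hinj, hterm]
  exact ENNReal.tsum_const_eq_top_of_ne_zero one_ne_zero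

end invPowAtoms

theorem exists_discrete_measure_avoiding_general (m : ℕ) (ϑ : ℝ)
    (E : Set ℝ) (hEc : E.Countable) :
    ∃ (μ : Measure ℝ) (Δ : Set ℝ), IsFiniteMeasure μ ∧ IsDiscreteWithAtoms μ Δ ∧
      Δ.Countable ∧ Δ.Infinite ∧ Δ ⊆ Set.Ici ϑ ∧ E ∩ Δ = ∅ ∧
      (∫⁻ s, ENNReal.ofReal (s ^ m) ∂μ < ⊤) ∧
      (∫⁻ s, ENNReal.ofReal (s ^ (m + 1)) ∂μ = ⊤) := by
  obtain ⟨t, hmono, ht⟩ :=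
    exists_strictMono_two_pow_mul_lt_notMem hEc (c := max ϑ 1) (by positivity)
  have htwo : ∀ n, (2 : ℝ) ^ n ≤ t n := fun n ↦
    (le_mul_of_one_le_right (by positivity) (le_max_right ϑ 1)).trans (ht n).1.le
  have hϑ : ∀ n, ϑ ≤ t n := fun n ↦ (le_max_left ϑ 1).trans <|
    (le_mul_of_one_le_left (by positivity) (one_le_pow₀ one_le_two)).trans (ht n).1.le
  have hpos : ∀ n, 0 < t n := fun n ↦ (by positivity : (0 : ℝ) < 2 ^ n).trans_le (htwo n)
  exact ⟨invPowAtoms m t, Set.range t, isFiniteMeasure_invPowAtoms m hmono.injective htwo,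
    isDiscreteWithAtoms_invPowAtoms m hpos, Set.countable_range t,
    Set.infinite_range_of_injective hmono.injective, Set.range_subset_iff.2 hϑ,
    Set.eq_empty_iff_forall_notMem.2 fun _ ⟨hE, n, hn⟩ ↦ (ht n).2 (hn ▸ hE),
    lintegral_pow_invPowAtoms_lt_top m hmono.injective htwo,
    lintegral_pow_succ_invPowAtoms_eq_top m hmono.injective hpos⟩

/-- If `m ∈ ℕ`, `ϑ ≥ 0` and `E ⊆ [0,∞)` is countably infinite, then there exists a finite
discrete Borel measure `μ` whose atom set is a countably infinite subset of `[ϑ,∞)`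
disjoint from `E`, with finite `m`-th moment and infinite `(m+1)`-th moment. -/
theorem exists_discrete_measure_avoiding (m : ℕ) (ϑ : ℝ) (hϑ : 0 ≤ ϑ)
    (E : Set ℝ) (hEc : E.Countable) (hEi : E.Infinite) (hE0 : E ⊆ Set.Ici (0 : ℝ)) :
    ∃ (μ : Measure ℝ) (Δ : Set ℝ), IsFiniteMeasure μ ∧ IsDiscreteWithAtoms μ Δ ∧
      Δ.Countable ∧ Δ.Infinite ∧ Δ ⊆ Set.Ici ϑ ∧ E ∩ Δ = ∅ ∧
      (∫⁻ s, ENNReal.ofReal (s ^ m) ∂μ < ⊤) ∧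
      (∫⁻ s, ENNReal.ofReal (s ^ (m + 1)) ∂μ = ⊤) :=
  exists_discrete_measure_avoiding_general m ϑ E hEc
end

section
/- Let X = ⋃_{k≥0} X_k where X_k = ⨆_{j=0}^{k} ℕ^j (with ℕ^0 = {0}), i.e., X is the set of all finite tuples of positive integers including the empty tuple. For every n ∈ ℕ and ϑ ∈ [0,∞), there exists a family {ν_x}_{x ∈ X} of finite discrete Borel measures on [0,∞) such that: (i) the atom sets {at(ν_x)}_{x∈X} are pairwise disjoint countably infinite subsets of [ϑ,∞); (ii) for every k ≥ 0, Σ_{x ∈ ℕ^k} ∫ s^{k+n} dν_x(s) ≤ 2^{-k}; (iii) for every k ≥ 0 and every x ∈ ℕ^k, ∫ s^{k+n+1} dν_x(s) = ∞. -/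
/-!
Give `ν_x` the mass `w_x / s ^ (|x| + n + 1)` at each atom `s = 2 ^ (⌈ϑ⌉ + ⟪encode x, m⟫)`,
`m ∈ ℕ`; the pairing function reserves a separate infinite set of exponents for every `x`. Then
`∫ s ^ (|x| + n + 1) dν_x = ∑ w_x = ∞`, whereas `∫ s ^ r dν_x ≤ ∑ w_x / s ≤ 2 w_x` for `r ≤ |x| + n`
since every atom is at least `1`. With `w_x = 2 ^ -(|x| + encode x + 2)` the moments over `|x| = k`
sum to at most `2 ^ -(k + 1) ∑ 2 ^ -(encode x) ≤ 2 ^ -k`.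
-/

open MeasureTheory ENNReal

open Set Function Encodable

lemma ENNReal.tsum_inv_two_pow_comp_le {ι : Type*} {f : ι → ℕ} (hf : Injective f) :
    ∑' i, (2⁻¹ : ℝ≥0∞) ^ f i ≤ 2 :=
  calc ∑' i, (2⁻¹ : ℝ≥0∞) ^ f i ≤ ∑' j, (2⁻¹ : ℝ≥0∞) ^ j :=
        ENNReal.tsum_comp_le_tsum_of_injective hf _
    _ = 2 := by rw [ENNReal.tsum_geometric, ENNReal.one_sub_inv_two, inv_inv]

noncomputable section

def discreteMeasure (Δ : Set ℝ) (α : ℝ → ℝ) : Measure ℝ :=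
  Measure.sum (fun t : Δ => ENNReal.ofReal (α t) • Measure.dirac (t : ℝ))

lemma isDiscreteWithAtoms_discreteMeasure {Δ : Set ℝ} {α : ℝ → ℝ} (hα : ∀ t ∈ Δ, 0 < α t) :
    IsDiscreteWithAtoms (discreteMeasure Δ α) Δ :=
  ⟨α, hα, rfl⟩

lemma lintegral_discreteMeasure_range {ι : Type*} {t : ι → ℝ} (ht : Injective t) (α : ℝ → ℝ)
    (g : ℝ → ℝ≥0∞) :
    ∫⁻ s, g s ∂discreteMeasure (range t) α = ∑' i, ENNReal.ofReal (α (t i)) * g (t i) := by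
  simp only [discreteMeasure, lintegral_sum_measure, lintegral_smul_measure, lintegral_dirac,
    smul_eq_mul]
  exact ((Equiv.ofInjective t ht).tsum_eq (fun s : range t => ENNReal.ofReal (α s) * g s)).symm

def powerLawMeasure {ι : Type*} (t : ι → ℝ) (w : ℝ) (p : ℕ) : Measure ℝ :=
  discreteMeasure (range t) (fun s => w / s ^ (p + 1))

section powerLawMeasure

variable {ι : Type*} {t : ι → ℝ} {w : ℝ} {p : ℕ}

lemma isDiscreteWithAtoms_powerLawMeasure (hw : 0 < w) (ht : ∀ i, 0 < t i) :
    IsDiscreteWithAtoms (powerLawMeasure t w p) (range t) :=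
  isDiscreteWithAtoms_discreteMeasure <| by
    rintro _ ⟨i, rfl⟩
    have := ht i
    positivity

lemma lintegral_pow_le_powerLawMeasure (ht : Injective t) (ht₁ : ∀ i, 1 ≤ t i) (hw : 0 ≤ w)
    {r : ℕ} (hr : r ≤ p) :
    ∫⁻ s, ENNReal.ofReal (s ^ r) ∂powerLawMeasure t w p ≤ ∑' i, ENNReal.ofReal (w / t i) := by
  rw [powerLawMeasure, lintegral_discreteMeasure_range ht]
  refine ENNReal.tsum_le_tsum fun i => ?_
  have hti : 0 < t i := one_pos.trans_le (ht₁ i)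
  rw [← ENNReal.ofReal_mul (by positivity)]
  refine ENNReal.ofReal_le_ofReal ?_
  have hpow : t i ^ (r + 1) ≤ t i ^ (p + 1) := pow_le_pow_right₀ (ht₁ i) (by omega)
  rw [div_mul_eq_mul_div, div_le_div_iff₀ (by positivity) hti, mul_assoc, ← pow_succ]
  exact mul_le_mul_of_nonneg_left hpow hw

lemma lintegral_pow_succ_powerLawMeasure [Infinite ι] (ht : Injective t) (ht₀ : ∀ i, 0 < t i)
    (hw : 0 < w) :
    ∫⁻ s, ENNReal.ofReal (s ^ (p + 1)) ∂powerLawMeasure t w p = ⊤ := by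
  rw [powerLawMeasure, lintegral_discreteMeasure_range ht]
  have hterm : ∀ i, ENNReal.ofReal (w / t i ^ (p + 1)) * ENNReal.ofReal (t i ^ (p + 1)) =
      ENNReal.ofReal w := fun i => by
    have := ht₀ i
    rw [← ENNReal.ofReal_mul (by positivity), div_mul_cancel₀ _ (by positivity)]
  simp only [hterm]
  exact ENNReal.tsum_const_eq_top_of_ne_zero (ENNReal.ofReal_pos.mpr hw).ne'

end powerLawMeasure

def atom {α : Type*} [Encodable α] (ϑ : ℝ) (x : α) (m : ℕ) : ℝ :=
  2 ^ (⌈ϑ⌉₊ + Nat.pair (encode x) m)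

section atom

variable {α : Type*} [Encodable α] (ϑ : ℝ)

lemma one_le_atom (x : α) (m : ℕ) : 1 ≤ atom ϑ x m :=
  one_le_pow₀ one_le_two

lemma atom_pos (x : α) (m : ℕ) : 0 < atom ϑ x m :=
  one_pos.trans_le (one_le_atom ϑ x m)

lemma le_atom (x : α) (m : ℕ) : ϑ ≤ atom ϑ x m :=
  calc ϑ ≤ ⌈ϑ⌉₊ := Nat.le_ceil ϑ
    _ ≤ (2 : ℝ) ^ ⌈ϑ⌉₊ := by exact_mod_cast (Nat.lt_two_pow_self).le
    _ ≤ atom ϑ x m := pow_le_pow_right₀ one_le_two (Nat.le_add_right _ _)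

lemma atom_eq_atom_iff {x y : α} {m l : ℕ} : atom ϑ x m = atom ϑ y l ↔ x = y ∧ m = l := by
  rw [atom, atom, pow_right_inj₀ two_pos (by norm_num), Nat.add_left_cancel_iff, Nat.pair_eq_pair,
    encode_inj]

lemma atom_injective (x : α) : Injective (atom ϑ x) :=
  fun _ _ h => ((atom_eq_atom_iff ϑ).mp h).2

lemma pairwise_disjoint_range_atom : Pairwise (Disjoint on fun x : α => range (atom ϑ x)) := by
  refine fun x y hxy => Set.disjoint_left.mpr ?_
  rintro _ ⟨m, rfl⟩ ⟨l, hl⟩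
  exact hxy ((atom_eq_atom_iff ϑ).mp hl).1.symm

end atom

def weight (x : List ℕ+) : ℝ :=
  2⁻¹ ^ (x.length + encode x + 2)

lemma weight_pos (x : List ℕ+) : 0 < weight x := by
  unfold weight; positivity

def familyMeasure (n : ℕ) (ϑ : ℝ) (x : List ℕ+) : Measure ℝ :=
  powerLawMeasure (atom ϑ x) (weight x) (x.length + n)

section family

variable (n : ℕ) (ϑ : ℝ)

lemma tsum_weight_div_atom_le (x : List ℕ+) :
    ∑' m, ENNReal.ofReal (weight x / atom ϑ x m) ≤ 2⁻¹ ^ (x.length + 1) * 2⁻¹ ^ encode x := by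
  have hterm : ∀ m, ENNReal.ofReal (weight x / atom ϑ x m) =
      2⁻¹ ^ (x.length + encode x + 2) * 2⁻¹ ^ (⌈ϑ⌉₊ + Nat.pair (encode x) m) := fun m => by
    rw [weight, atom, div_eq_mul_inv, ← inv_pow, ENNReal.ofReal_mul (by positivity),
      ENNReal.ofReal_pow (by positivity), ENNReal.ofReal_pow (by positivity),
      ENNReal.ofReal_inv_of_pos two_pos, ENNReal.ofReal_ofNat]
  calc ∑' m, ENNReal.ofReal (weight x / atom ϑ x m)
      ≤ ∑' m, 2⁻¹ ^ (x.length + encode x + 2) * 2⁻¹ ^ Nat.pair (encode x) m := by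
        refine ENNReal.tsum_le_tsum fun m => hterm m ▸ mul_le_mul_right ?_ _
        exact pow_le_pow_right_of_le_one' (ENNReal.inv_le_one.mpr one_le_two) (Nat.le_add_left _ _)
    _ ≤ 2⁻¹ ^ (x.length + encode x + 2) * 2 := by
        rw [ENNReal.tsum_mul_left]
        gcongr
        exact ENNReal.tsum_inv_two_pow_comp_le fun _ _ h => (Nat.pair_eq_pair.mp h).2
    _ = 2⁻¹ ^ (x.length + 1) * 2⁻¹ ^ encode x := by
        rw [show x.length + encode x + 2 = x.length + 1 + encode x + 1 by ring, pow_succ, pow_add,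
          mul_assoc, ENNReal.inv_mul_cancel two_ne_zero ofNat_ne_top, mul_one]

lemma lintegral_pow_familyMeasure_le (x : List ℕ+) {r : ℕ} (hr : r ≤ x.length + n) :
    ∫⁻ s, ENNReal.ofReal (s ^ r) ∂familyMeasure n ϑ x ≤ 2⁻¹ ^ (x.length + 1) * 2⁻¹ ^ encode x :=
  (lintegral_pow_le_powerLawMeasure (atom_injective ϑ x) (one_le_atom ϑ x) (weight_pos x).le
    hr).trans (tsum_weight_div_atom_le ϑ x)

lemma isFiniteMeasure_familyMeasure (x : List ℕ+) : IsFiniteMeasure (familyMeasure n ϑ x) := by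
  refine ⟨?_⟩
  have h := lintegral_pow_familyMeasure_le n ϑ x (Nat.zero_le _)
  simp only [pow_zero, ENNReal.ofReal_one, lintegral_one] at h
  exact h.trans_lt (by simp [ENNReal.mul_lt_top])

lemma lintegral_pow_succ_familyMeasure (x : List ℕ+) :
    ∫⁻ s, ENNReal.ofReal (s ^ (x.length + n + 1)) ∂familyMeasure n ϑ x = ⊤ :=
  lintegral_pow_succ_powerLawMeasure (atom_injective ϑ x) (atom_pos ϑ x) (weight_pos x)

end family

end

theorem exists_family_discrete_measures_general (n : ℕ) (ϑ : ℝ) :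
    ∃ (ν : List ℕ+ → Measure ℝ) (Δ : List ℕ+ → Set ℝ),
      (∀ x, IsFiniteMeasure (ν x)) ∧
      (∀ x, IsDiscreteWithAtoms (ν x) (Δ x)) ∧
      (∀ x, (Δ x).Countable ∧ (Δ x).Infinite ∧ Δ x ⊆ Set.Ici ϑ) ∧
      Pairwise (Function.onFun Disjoint Δ) ∧
      (∀ k : ℕ, (∑' x : {x : List ℕ+ // x.length = k},
          ∫⁻ s, ENNReal.ofReal (s ^ (k + n)) ∂(ν x)) ≤ 2⁻¹ ^ k) ∧
      (∀ k : ℕ, ∀ x : List ℕ+, x.length = k →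
          ∫⁻ s, ENNReal.ofReal (s ^ (k + n + 1)) ∂(ν x) = ⊤) := by
  refine ⟨familyMeasure n ϑ, fun x => range (atom ϑ x), isFiniteMeasure_familyMeasure n ϑ,
    fun x => isDiscreteWithAtoms_powerLawMeasure (weight_pos x) (atom_pos ϑ x),
    fun x => ⟨countable_range _, infinite_range_of_injective (atom_injective ϑ x),
      range_subset_iff.mpr (le_atom ϑ x)⟩,
    pairwise_disjoint_range_atom ϑ, fun k => ?_,
    fun k x hx => hx ▸ lintegral_pow_succ_familyMeasure n ϑ x⟩
  calc _ ≤ ∑' x : {x : List ℕ+ // x.length = k}, 2⁻¹ ^ (k + 1) * 2⁻¹ ^ encode (x : List ℕ+) :=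
        ENNReal.tsum_le_tsum fun ⟨x, hx⟩ => hx ▸ lintegral_pow_familyMeasure_le n ϑ x le_rfl
    _ ≤ 2⁻¹ ^ (k + 1) * 2 := by
        rw [ENNReal.tsum_mul_left]
        gcongr
        exact ENNReal.tsum_inv_two_pow_comp_le (encode_injective.comp Subtype.val_injective)
    _ = 2⁻¹ ^ k := by
        rw [pow_succ, mul_assoc, ENNReal.inv_mul_cancel two_ne_zero ofNat_ne_top, mul_one]

/-- Indexing the family by the set `X` of all finite tuples of positive integers
(modelled as `List ℕ+`, `ℕ^k` corresponding to lists of length `k`): for every `n ∈ ℕ` and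
`ϑ ≥ 0`, there is a family `{ν_x}` of finite discrete Borel measures on `[0,∞)` with
pairwise disjoint countably infinite atom sets contained in `[ϑ,∞)`, such that
`Σ_{x ∈ ℕ^k} ∫ s^{k+n} dν_x ≤ 2^{-k}` and `∫ s^{k+n+1} dν_x = ∞` for every `x ∈ ℕ^k`. -/
theorem exists_family_discrete_measures (n : ℕ) (ϑ : ℝ) (hϑ : 0 ≤ ϑ) :
    ∃ (ν : List ℕ+ → Measure ℝ) (Δ : List ℕ+ → Set ℝ),
      (∀ x, IsFiniteMeasure (ν x)) ∧
      (∀ x, IsDiscreteWithAtoms (ν x) (Δ x)) ∧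
      (∀ x, (Δ x).Countable ∧ (Δ x).Infinite ∧ Δ x ⊆ Set.Ici ϑ) ∧
      Pairwise (Function.onFun Disjoint Δ) ∧
      (∀ k : ℕ, (∑' x : {x : List ℕ+ // x.length = k},
          ∫⁻ s, ENNReal.ofReal (s ^ (k + n)) ∂(ν x)) ≤ 2⁻¹ ^ k) ∧
      (∀ k : ℕ, ∀ x : List ℕ+, x.length = k →
          ∫⁻ s, ENNReal.ofReal (s ^ (k + n + 1)) ∂(ν x) = ⊤) :=
  exists_family_discrete_measures_general n ϑ
end

section
/- Let ν be a Borel measure on [1,∞), k ∈ ℕ, and let Ω = ⨆_{j≥1} Ω_j be a Borel set partitioned into countably many Borel sets, with 0 < ∫_{Ω_j} s^{k+1} dν(s) < ∞ for each j and 0 < ∫_Ω s^k dν(s) < ∞. Define probability measures μ_j(Δ) = (∫_{Δ∩Ω_j} s^{k+1} dν)/(∫_{Ω_j} s^{k+1} dν) and μ(Δ) = (∫_{Δ∩Ω} s^k dν)/(∫_Ω s^k dν), and weights λ_j² = (∫_{Ω_j} s^{k+1} dν)/(∫_Ω s^k dν). Then μ(Δ) = Σ_{j≥1} λ_j² ∫_Δ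 (1/s) dμ_j(s) for every Borel set Δ. -/
open MeasureTheory ENNReal

/-!
Both sides are normalised densities against `ν`: `μ_j` has density `s^(k+1)` on `Ω_j`, and
integrating `1/s` against it lowers the exponent to `s^k`, which is legitimate because
`Ω ⊆ [1, ∞)`. The factor `λ_j²` exactly trades the normalisation of `μ_j` for that of `μ`,
and the sum over `j` reassembles `∫_{Δ ∩ Ω} s^k dν` by countable additivity of the
lower integral over the partition `Ω = ⨆ Ω_j`.
-/

namespace MeasureTheory

variable {α : Type*} [MeasurableSpace α] {μ ν : Measure α} {A : Set α} {f : α → ℝ≥0∞}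
  {c : ℝ≥0∞}

theorem Measure.eq_smul_withDensity_of_forall_apply
    (h : ∀ Δ, MeasurableSet Δ → μ Δ = (∫⁻ s in Δ ∩ A, f s ∂ν) / c) :
    μ = c⁻¹ • (ν.restrict A).withDensity f := by
  ext Δ hΔ
  rw [h Δ hΔ, Measure.smul_apply, smul_eq_mul, withDensity_apply _ hΔ,
    Measure.restrict_restrict hΔ, ENNReal.div_eq_inv_mul]

theorem setLIntegral_of_forall_apply_eq_div
    (h : ∀ Δ, MeasurableSet Δ → μ Δ = (∫⁻ s in Δ ∩ A, f s ∂ν) / c) (hf : Measurable f)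
    {g : α → ℝ≥0∞} (hg : Measurable g) {Δ : Set α} (hΔ : MeasurableSet Δ) :
    ∫⁻ s in Δ, g s ∂μ = c⁻¹ * ∫⁻ s in Δ ∩ A, f s * g s ∂ν := by
  rw [Measure.eq_smul_withDensity_of_forall_apply h, Measure.restrict_smul,
    lintegral_smul_measure, setLIntegral_withDensity_eq_setLIntegral_mul _ hf hg hΔ,
    Measure.restrict_restrict hΔ]
  rfl

theorem setLIntegral_inter_iUnion {Ωj : ℕ → Set α} (hΩm : ∀ j, MeasurableSet (Ωj j))
    (hdisj : Pairwise (Function.onFun Disjoint Ωj)) {Δ : Set α} (hΔ : MeasurableSet Δ)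
    (f : α → ℝ≥0∞) :
    ∫⁻ s in Δ ∩ ⋃ j, Ωj j, f s ∂ν = ∑' j, ∫⁻ s in Δ ∩ Ωj j, f s ∂ν := by
  rw [Set.inter_iUnion, lintegral_iUnion (fun j => hΔ.inter (hΩm j))
    (fun i j hij => ((hdisj hij).inter_left' Δ).inter_right' Δ)]

end MeasureTheory

theorem ENNReal.ofReal_pow_succ_mul_ofReal_one_div {s : ℝ} (hs : 0 < s) (k : ℕ) :
    ENNReal.ofReal (s ^ (k + 1)) * ENNReal.ofReal (1 / s) = ENNReal.ofReal (s ^ k) := by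
  rw [← ENNReal.ofReal_mul (by positivity), pow_succ, mul_assoc, mul_one_div_cancel hs.ne',
    mul_one]

theorem consistency_condition_general (ν : Measure ℝ) (k : ℕ)
    (Ω : Set ℝ) (Ωj : ℕ → Set ℝ) (hΩm : ∀ j, MeasurableSet (Ωj j))
    (hdisj : Pairwise (Function.onFun Disjoint Ωj)) (hunion : Ω = ⋃ j, Ωj j)
    (hΩ1 : Ω ⊆ Set.Ici (1 : ℝ))
    (hjpos : ∀ j, 0 < ∫⁻ s in Ωj j, ENNReal.ofReal (s ^ (k + 1)) ∂ν)
    (hjfin : ∀ j, ∫⁻ s in Ωj j, ENNReal.ofReal (s ^ (k + 1)) ∂ν < ⊤)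
    (μ : Measure ℝ) (μj : ℕ → Measure ℝ)
    (hμ : ∀ Δ : Set ℝ, MeasurableSet Δ →
      μ Δ = (∫⁻ s in Δ ∩ Ω, ENNReal.ofReal (s ^ k) ∂ν) /
            (∫⁻ s in Ω, ENNReal.ofReal (s ^ k) ∂ν))
    (hμj : ∀ j, ∀ Δ : Set ℝ, MeasurableSet Δ →
      μj j Δ = (∫⁻ s in Δ ∩ Ωj j, ENNReal.ofReal (s ^ (k + 1)) ∂ν) /
               (∫⁻ s in Ωj j, ENNReal.ofReal (s ^ (k + 1)) ∂ν))
    (lsq : ℕ → ℝ≥0∞)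
    (hlsq : ∀ j, lsq j = (∫⁻ s in Ωj j, ENNReal.ofReal (s ^ (k + 1)) ∂ν) /
                       (∫⁻ s in Ω, ENNReal.ofReal (s ^ k) ∂ν)) :
    ∀ Δ : Set ℝ, MeasurableSet Δ →
      μ Δ = ∑' j : ℕ, lsq j * ∫⁻ s in Δ, ENNReal.ofReal (1 / s) ∂(μj j) := by
  intro Δ hΔ
  have hint_inv (j : ℕ) : ∫⁻ s in Δ, ENNReal.ofReal (1 / s) ∂(μj j) =
      (∫⁻ s in Ωj j, ENNReal.ofReal (s ^ (k + 1)) ∂ν)⁻¹ *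
        ∫⁻ s in Δ ∩ Ωj j, ENNReal.ofReal (s ^ k) ∂ν := by
    rw [setLIntegral_of_forall_apply_eq_div (hμj j) (by fun_prop) (by fun_prop) hΔ]
    refine congrArg _ (setLIntegral_congr_fun (hΔ.inter (hΩm j)) fun s hs => ?_)
    have hs1 : (1 : ℝ) ≤ s := hΩ1 (hunion ▸ Set.mem_iUnion_of_mem j hs.2)
    exact ENNReal.ofReal_pow_succ_mul_ofReal_one_div (by linarith) k
  rw [hμ Δ hΔ, hunion, setLIntegral_inter_iUnion hΩm hdisj hΔ, ENNReal.div_eq_inv_mul,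
    ← ENNReal.tsum_mul_left]
  refine tsum_congr fun j => ?_
  rw [hint_inv j, hlsq j, hunion, ENNReal.div_eq_inv_mul, mul_assoc, ← mul_assoc _ _⁻¹,
    ENNReal.mul_inv_cancel (hjpos j).ne' (hjfin j).ne, one_mul]

/-- Consistency condition: with `Ω = ⨆_j Ω_j` partitioned, weights
`λ_j² = (∫_{Ω_j} s^{k+1} dν)/(∫_Ω s^k dν)` and the normalized measures `μ_j`, `μ` as in
the statement, one has `μ(Δ) = Σ_j λ_j² ∫_Δ (1/s) dμ_j(s)` for every Borel set `Δ`. -/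
theorem consistency_condition (ν : Measure ℝ) (hν : ν (Set.Iio 1) = 0) (k : ℕ)
    (Ω : Set ℝ) (Ωj : ℕ → Set ℝ) (hΩm : ∀ j, MeasurableSet (Ωj j))
    (hdisj : Pairwise (Function.onFun Disjoint Ωj)) (hunion : Ω = ⋃ j, Ωj j)
    (hΩ1 : Ω ⊆ Set.Ici (1 : ℝ))
    (hjpos : ∀ j, 0 < ∫⁻ s in Ωj j, ENNReal.ofReal (s ^ (k + 1)) ∂ν)
    (hjfin : ∀ j, ∫⁻ s in Ωj j, ENNReal.ofReal (s ^ (k + 1)) ∂ν < ⊤)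
    (hpos : 0 < ∫⁻ s in Ω, ENNReal.ofReal (s ^ k) ∂ν)
    (hfin : ∫⁻ s in Ω, ENNReal.ofReal (s ^ k) ∂ν < ⊤)
    (μ : Measure ℝ) (μj : ℕ → Measure ℝ)
    (hμ : ∀ Δ : Set ℝ, MeasurableSet Δ →
      μ Δ = (∫⁻ s in Δ ∩ Ω, ENNReal.ofReal (s ^ k) ∂ν) /
            (∫⁻ s in Ω, ENNReal.ofReal (s ^ k) ∂ν))
    (hμj : ∀ j, ∀ Δ : Set ℝ, MeasurableSet Δ →
      μj j Δ = (∫⁻ s in Δ ∩ Ωj j, ENNReal.ofReal (s ^ (k + 1)) ∂ν) /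
               (∫⁻ s in Ωj j, ENNReal.ofReal (s ^ (k + 1)) ∂ν))
    (lsq : ℕ → ℝ≥0∞)
    (hlsq : ∀ j, lsq j = (∫⁻ s in Ωj j, ENNReal.ofReal (s ^ (k + 1)) ∂ν) /
                       (∫⁻ s in Ω, ENNReal.ofReal (s ^ k) ∂ν)) :
    ∀ Δ : Set ℝ, MeasurableSet Δ →
      μ Δ = ∑' j : ℕ, lsq j * ∫⁻ s in Δ, ENNReal.ofReal (1 / s) ∂(μj j) :=
  consistency_condition_general ν k Ω Ωj hΩm hdisj hunion hΩ1 hjpos hjfin μ μj hμ hμj lsq hlsq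
end

section
/- Let {μ_j}_{j≥0} be Borel probability measures on [0,∞) such that the closed support of μ_j is contained in [ϑ_j, ∞), where ϑ_0 = 1, each ϑ_j ≥ 1, and Σ_{j≥0} 1/ϑ_j < ∞. Suppose n ≥ 1 and ∫ s^{n-1} dμ_j(s) < ∞ for all j. Define λ̃_j = (ϑ_j ∫ s^{n-1} dμ_j(s))^{-1/2}. Then ζ := Σ_{j≥0} λ̃_j² ∫ (1/s) dμ_j(s) satisfies 0 < ζ < ∞, and the measure μ(Δ) = ζ^{-1} Σ_{j≥0} λ̃_j² ∫_Δ (1/s) dμ_j(s) is a Borel probability measure on [1,∞) satisfying ∫ s^n dμ(s) < ∞ and ∫ s^{n+1} dμ(s) = ∞. -/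
/-!
Each `μ_j` lives on `[ϑ_j, ∞) ⊆ [1, ∞)`, so `λ̃_j² ≤ 1/ϑ_j` and `∫ s⁻¹ dμ_j ≤ 1`, whence
`ζ ≤ Σ_j 1/ϑ_j < ∞`. The density `s⁻¹` lowers every moment by one, and `λ̃_j` is chosen so that
`λ̃_j² ∫ s^{n-1} dμ_j = 1/ϑ_j`. Hence `∫ s^n dμ = ζ⁻¹ Σ_j 1/ϑ_j < ∞`, while the support condition
`s ≥ ϑ_j` gives `λ̃_j² ∫ s^n dμ_j ≥ λ̃_j² ϑ_j ∫ s^{n-1} dμ_j = 1` for every `j`, so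
`∫ s^{n+1} dμ = ∞`.
-/

open MeasureTheory ENNReal Set

lemma one_div_mul_pow_succ {s : ℝ} (hs : s ≠ 0) (k : ℕ) : 1 / s * s ^ (k + 1) = s ^ k := by
  rw [pow_succ', ← mul_assoc, one_div_mul_cancel hs, one_mul]

lemma ae_le_of_measure_Iio_eq_zero {μ : Measure ℝ} {a : ℝ} (h : μ (Iio a) = 0) :
    ∀ᵐ s ∂μ, a ≤ s :=
  (measure_eq_zero_iff_ae_notMem.1 h).mono fun _ hs => not_lt.1 hs

section MeasureOnHalfLine

variable {μ : Measure ℝ}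

lemma lintegral_inv_le_one [IsProbabilityMeasure μ] (h : ∀ᵐ s ∂μ, 1 ≤ s) :
    ∫⁻ s, ENNReal.ofReal (1 / s) ∂μ ≤ 1 := by
  rw [← measure_univ (μ := μ), ← lintegral_one]
  refine lintegral_mono_ae (h.mono fun s hs => ?_)
  exact ENNReal.ofReal_le_one.2 (div_le_one_of_le₀ hs (by linarith))

lemma one_le_lintegral_pow [IsProbabilityMeasure μ] (h : ∀ᵐ s ∂μ, 1 ≤ s) (k : ℕ) :
    1 ≤ ∫⁻ s, ENNReal.ofReal (s ^ k) ∂μ := by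
  rw [← measure_univ (μ := μ), ← lintegral_one]
  refine lintegral_mono_ae (h.mono fun s hs => ?_)
  exact ENNReal.one_le_ofReal.2 (one_le_pow₀ hs)

lemma lintegral_inv_ne_zero [NeZero μ] (h : ∀ᵐ s ∂μ, 0 < s) :
    ∫⁻ s, ENNReal.ofReal (1 / s) ∂μ ≠ 0 := by
  rw [Ne, lintegral_eq_zero_iff (by fun_prop)]
  intro h0
  have := ae_neBot.2 (NeZero.ne μ)
  obtain ⟨s, hs, hs0⟩ := (h.and h0).exists
  simp only [Pi.zero_apply, ENNReal.ofReal_eq_zero] at hs0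
  exact (one_div_pos.2 hs).not_ge hs0

lemma lintegral_inv_mul_pow_succ (h : ∀ᵐ s ∂μ, 0 < s) (k : ℕ) :
    ∫⁻ s, ENNReal.ofReal (1 / s) * ENNReal.ofReal (s ^ (k + 1)) ∂μ =
      ∫⁻ s, ENNReal.ofReal (s ^ k) ∂μ := by
  refine lintegral_congr_ae (h.mono fun s hs => ?_)
  dsimp only
  rw [← ENNReal.ofReal_mul (one_div_pos.2 hs).le, one_div_mul_pow_succ hs.ne']

lemma ofReal_mul_lintegral_pow_le {a : ℝ} (ha : 0 ≤ a) (h : ∀ᵐ s ∂μ, a ≤ s) (k : ℕ) :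
    ENNReal.ofReal a * ∫⁻ s, ENNReal.ofReal (s ^ k) ∂μ ≤
      ∫⁻ s, ENNReal.ofReal (s ^ (k + 1)) ∂μ := by
  rw [← lintegral_const_mul _ (by fun_prop)]
  refine lintegral_mono_ae (h.mono fun s hs => ?_)
  rw [← ENNReal.ofReal_mul ha, pow_succ']
  exact ENNReal.ofReal_le_ofReal (mul_le_mul_of_nonneg_right hs (pow_nonneg (ha.trans hs) k))

end MeasureOnHalfLine

/-- The weight `λ̃²` of the paper, with `k = n - 1`. -/
noncomputable def momentWeight (μ : Measure ℝ) (ϑ : ℝ) (k : ℕ) : ℝ≥0∞ :=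
  (ENNReal.ofReal ϑ * ∫⁻ s, ENNReal.ofReal (s ^ k) ∂μ)⁻¹

section MomentWeight

variable {μ : Measure ℝ} [IsProbabilityMeasure μ] {ϑ : ℝ} {k : ℕ}

lemma momentWeight_mul_lintegral_inv_le (hϑ : 1 ≤ ϑ) (h : ∀ᵐ s ∂μ, ϑ ≤ s) :
    momentWeight μ ϑ k * ∫⁻ s, ENNReal.ofReal (1 / s) ∂μ ≤ ENNReal.ofReal (1 / ϑ) := by
  have h1 : ∀ᵐ s ∂μ, 1 ≤ s := h.mono fun _ hs => hϑ.trans hs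
  calc momentWeight μ ϑ k * ∫⁻ s, ENNReal.ofReal (1 / s) ∂μ
      ≤ (ENNReal.ofReal ϑ)⁻¹ * 1 :=
        mul_le_mul'
          (ENNReal.inv_le_inv.2 (le_mul_of_one_le_right zero_le (one_le_lintegral_pow h1 k)))
          (lintegral_inv_le_one h1)
    _ = ENNReal.ofReal (1 / ϑ) := by
        rw [mul_one, one_div, ENNReal.ofReal_inv_of_pos (by linarith)]

lemma momentWeight_mul_lintegral_inv_ne_zero (hϑ : 0 < ϑ) (h : ∀ᵐ s ∂μ, ϑ ≤ s)
    (hM : ∫⁻ s, ENNReal.ofReal (s ^ k) ∂μ < ⊤) :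
    momentWeight μ ϑ k * ∫⁻ s, ENNReal.ofReal (1 / s) ∂μ ≠ 0 :=
  mul_ne_zero (ENNReal.inv_ne_zero.2 (ENNReal.mul_ne_top ofReal_ne_top hM.ne))
    (lintegral_inv_ne_zero (h.mono fun _ hs => by linarith))

lemma momentWeight_mul_lintegral_inv_mul_pow_succ (hϑ : 1 ≤ ϑ) (h : ∀ᵐ s ∂μ, ϑ ≤ s)
    (hM : ∫⁻ s, ENNReal.ofReal (s ^ k) ∂μ < ⊤) :
    momentWeight μ ϑ k * ∫⁻ s, ENNReal.ofReal (1 / s) * ENNReal.ofReal (s ^ (k + 1)) ∂μ =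
      ENNReal.ofReal (1 / ϑ) := by
  have h1 : ∀ᵐ s ∂μ, 1 ≤ s := h.mono fun _ hs => hϑ.trans hs
  have hM0 : ∫⁻ s, ENNReal.ofReal (s ^ k) ∂μ ≠ 0 :=
    (zero_lt_one.trans_le (one_le_lintegral_pow h1 k)).ne'
  rw [lintegral_inv_mul_pow_succ (h1.mono fun _ hs => by linarith), momentWeight,
    ENNReal.mul_inv (Or.inr hM.ne) (Or.inl ofReal_ne_top), mul_assoc,
    ENNReal.inv_mul_cancel hM0 hM.ne, mul_one, one_div, ENNReal.ofReal_inv_of_pos (by linarith)]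

lemma one_le_momentWeight_mul_lintegral_inv_mul_pow_add_two (hϑ : 1 ≤ ϑ)
    (h : ∀ᵐ s ∂μ, ϑ ≤ s) (hM : ∫⁻ s, ENNReal.ofReal (s ^ k) ∂μ < ⊤) :
    1 ≤ momentWeight μ ϑ k *
      ∫⁻ s, ENNReal.ofReal (1 / s) * ENNReal.ofReal (s ^ (k + 1 + 1)) ∂μ := by
  have h1 : ∀ᵐ s ∂μ, 1 ≤ s := h.mono fun _ hs => hϑ.trans hs
  have hM0 : ∫⁻ s, ENNReal.ofReal (s ^ k) ∂μ ≠ 0 :=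
    (zero_lt_one.trans_le (one_le_lintegral_pow h1 k)).ne'
  rw [lintegral_inv_mul_pow_succ (h1.mono fun _ hs => by linarith), momentWeight,
    ← ENNReal.inv_mul_cancel (mul_ne_zero (ENNReal.ofReal_pos.2 (by linarith)).ne' hM0)
      (ENNReal.mul_ne_top ofReal_ne_top hM.ne)]
  exact mul_le_mul_right (ofReal_mul_lintegral_pow_le (by linarith) h k) _

end MomentWeight

noncomputable def invDensityMixture {ι : Type*} (w : ι → ℝ≥0∞) (μ : ι → Measure ℝ) :
    Measure ℝ :=
  Measure.sum fun j => w j • (μ j).withDensity fun s => ENNReal.ofReal (1 / s)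

section InvDensityMixture

variable {ι : Type*} (w : ι → ℝ≥0∞) (μ : ι → Measure ℝ)

lemma invDensityMixture_apply {Δ : Set ℝ} (hΔ : MeasurableSet Δ) :
    invDensityMixture w μ Δ = ∑' j, w j * ∫⁻ s in Δ, ENNReal.ofReal (1 / s) ∂μ j := by
  simp only [invDensityMixture, Measure.sum_apply _ hΔ, Measure.smul_apply,
    withDensity_apply _ hΔ, smul_eq_mul]

lemma invDensityMixture_apply_eq_zero {Δ : Set ℝ} (hΔ : MeasurableSet Δ) (h : ∀ j, μ j Δ = 0) :
    invDensityMixture w μ Δ = 0 :=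
  (Measure.sum_apply_eq_zero' hΔ).2 fun j => by
    rw [Measure.smul_apply, withDensity_absolutelyContinuous _ _ (h j), smul_zero]

lemma lintegral_invDensityMixture [Countable ι] {g : ℝ → ℝ≥0∞} (hg : Measurable g) :
    ∫⁻ s, g s ∂invDensityMixture w μ =
      ∑' j, w j * ∫⁻ s, ENNReal.ofReal (1 / s) * g s ∂μ j := by
  simp only [invDensityMixture, lintegral_sum_measure, lintegral_smul_measure,
    lintegral_withDensity_eq_lintegral_mul _ (by fun_prop : Measurable fun s : ℝ =>
      ENNReal.ofReal (1 / s)) hg, Pi.mul_apply, smul_eq_mul]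

end InvDensityMixture

lemma tsum_eq_top_of_forall_one_le {ι : Type*} [Infinite ι] {f : ι → ℝ≥0∞}
    (h : ∀ i, 1 ≤ f i) : ∑' i, f i = ⊤ :=
  top_unique ((ENNReal.tsum_const_eq_top_of_ne_zero one_ne_zero).symm.trans_le
    (ENNReal.tsum_le_tsum h))

theorem exists_measure_with_prescribed_moments_general
    (ϑ : ℕ → ℝ) (hϑ1 : ∀ j, 1 ≤ ϑ j)
    (hsum : Summable (fun j => 1 / ϑ j))
    (μj : ℕ → Measure ℝ) (hprob : ∀ j, IsProbabilityMeasure (μj j))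
    (hsupp : ∀ j, μj j (Set.Iio (ϑ j)) = 0)
    (n : ℕ) (hn : 1 ≤ n)
    (hmom : ∀ j, ∫⁻ s, ENNReal.ofReal (s ^ (n - 1)) ∂(μj j) < ⊤)
    (lsq : ℕ → ℝ≥0∞)
    (hlsq : ∀ j, lsq j =
      (ENNReal.ofReal (ϑ j) * ∫⁻ s, ENNReal.ofReal (s ^ (n - 1)) ∂(μj j))⁻¹) :
    (0 < ∑' j : ℕ, lsq j * ∫⁻ s, ENNReal.ofReal (1 / s) ∂(μj j)) ∧
    (∑' j : ℕ, lsq j * ∫⁻ s, ENNReal.ofReal (1 / s) ∂(μj j) < ⊤) ∧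
    ∃ μ : Measure ℝ,
      (∀ Δ : Set ℝ, MeasurableSet Δ →
        μ Δ = (∑' j : ℕ, lsq j * ∫⁻ s, ENNReal.ofReal (1 / s) ∂(μj j))⁻¹ *
              ∑' j : ℕ, lsq j * ∫⁻ s in Δ, ENNReal.ofReal (1 / s) ∂(μj j)) ∧
      IsProbabilityMeasure μ ∧ μ (Set.Iio 1) = 0 ∧
      (∫⁻ s, ENNReal.ofReal (s ^ n) ∂μ < ⊤) ∧
      (∫⁻ s, ENNReal.ofReal (s ^ (n + 1)) ∂μ = ⊤) := by
  obtain ⟨k, rfl⟩ : ∃ k, n = k + 1 := ⟨n - 1, by omega⟩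
  simp only [Nat.add_sub_cancel] at hmom hlsq
  obtain rfl : lsq = fun j => momentWeight (μj j) (ϑ j) k := funext hlsq
  have hϑ : ∀ j, ∀ᵐ s ∂μj j, ϑ j ≤ s := fun j => ae_le_of_measure_Iio_eq_zero (hsupp j)
  set ν := invDensityMixture (fun j => momentWeight (μj j) (ϑ j) k) μj
  have hζ : ν univ = ∑' j, momentWeight (μj j) (ϑ j) k * ∫⁻ s, ENNReal.ofReal (1 / s) ∂μj j := by
    simpa only [Measure.restrict_univ] using invDensityMixture_apply _ μj .univ
  rw [← hζ]
  have hpos : 0 < ν univ := pos_of_ne_zero fun h =>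
    momentWeight_mul_lintegral_inv_ne_zero (one_pos.trans_le (hϑ1 0)) (hϑ 0) (hmom 0)
      (ENNReal.tsum_eq_zero.1 (hζ ▸ h) 0)
  have hfin : ν univ < ⊤ := hζ ▸ (ENNReal.tsum_le_tsum fun j =>
    momentWeight_mul_lintegral_inv_le (hϑ1 j) (hϑ j)).trans_lt hsum.tsum_ofReal_ne_top.lt_top
  refine ⟨hpos, hfin, (ν univ)⁻¹ • ν, fun Δ hΔ => ?_, ⟨ENNReal.inv_mul_cancel hpos.ne' hfin.ne⟩,
    ?_, ?_, ?_⟩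
  · rw [Measure.smul_apply, invDensityMixture_apply _ _ hΔ, smul_eq_mul]
  · rw [Measure.smul_apply, invDensityMixture_apply_eq_zero _ _ measurableSet_Iio fun j =>
      measure_mono_null (Iio_subset_Iio (hϑ1 j)) (hsupp j), smul_zero]
  · rw [lintegral_smul_measure, lintegral_invDensityMixture _ _ (by fun_prop), tsum_congr fun j =>
      momentWeight_mul_lintegral_inv_mul_pow_succ (hϑ1 j) (hϑ j) (hmom j)]
    exact ENNReal.mul_lt_top (ENNReal.inv_lt_top.2 hpos) hsum.tsum_ofReal_ne_top.lt_top
  · rw [lintegral_smul_measure, lintegral_invDensityMixture _ _ (by fun_prop),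
      tsum_eq_top_of_forall_one_le fun j =>
        one_le_momentWeight_mul_lintegral_inv_mul_pow_add_two (hϑ1 j) (hϑ j) (hmom j),
      smul_eq_mul, ENNReal.mul_top (ENNReal.inv_ne_zero.2 hfin.ne)]

/-- Let `{μ_j}` be Borel probability measures with `supp μ_j ⊆ [ϑ_j,∞)`, `ϑ_0 = 1`,
`ϑ_j ≥ 1`, `Σ_j 1/ϑ_j < ∞`, `n ≥ 1` and `∫ s^{n-1} dμ_j < ∞`.  With
`λ̃_j² = (ϑ_j ∫ s^{n-1} dμ_j)⁻¹` and `ζ = Σ_j λ̃_j² ∫ (1/s) dμ_j`, one has `0 < ζ < ∞`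
and the measure `μ(Δ) = ζ⁻¹ Σ_j λ̃_j² ∫_Δ (1/s) dμ_j` is a Borel probability measure
supported in `[1,∞)` with `∫ s^n dμ < ∞` and `∫ s^{n+1} dμ = ∞`. -/
theorem exists_measure_with_prescribed_moments
    (ϑ : ℕ → ℝ) (hϑ0 : ϑ 0 = 1) (hϑ1 : ∀ j, 1 ≤ ϑ j)
    (hsum : Summable (fun j => 1 / ϑ j))
    (μj : ℕ → Measure ℝ) (hprob : ∀ j, IsProbabilityMeasure (μj j))
    (hsupp : ∀ j, μj j (Set.Iio (ϑ j)) = 0)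
    (n : ℕ) (hn : 1 ≤ n)
    (hmom : ∀ j, ∫⁻ s, ENNReal.ofReal (s ^ (n - 1)) ∂(μj j) < ⊤)
    (lsq : ℕ → ℝ≥0∞)
    (hlsq : ∀ j, lsq j =
      (ENNReal.ofReal (ϑ j) * ∫⁻ s, ENNReal.ofReal (s ^ (n - 1)) ∂(μj j))⁻¹) :
    (0 < ∑' j : ℕ, lsq j * ∫⁻ s, ENNReal.ofReal (1 / s) ∂(μj j)) ∧
    (∑' j : ℕ, lsq j * ∫⁻ s, ENNReal.ofReal (1 / s) ∂(μj j) < ⊤) ∧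
    ∃ μ : Measure ℝ,
      (∀ Δ : Set ℝ, MeasurableSet Δ →
        μ Δ = (∑' j : ℕ, lsq j * ∫⁻ s, ENNReal.ofReal (1 / s) ∂(μj j))⁻¹ *
              ∑' j : ℕ, lsq j * ∫⁻ s in Δ, ENNReal.ofReal (1 / s) ∂(μj j)) ∧
      IsProbabilityMeasure μ ∧ μ (Set.Iio 1) = 0 ∧
      (∫⁻ s, ENNReal.ofReal (s ^ n) ∂μ < ⊤) ∧
      (∫⁻ s, ENNReal.ofReal (s ^ (n + 1)) ∂μ = ⊤) :=
  exists_measure_with_prescribed_moments_general ϑ hϑ1 hsum μj hprob hsupp n hn hmom lsq hlsq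
end
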